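/- arXiv:1211.0649 — 3 statements merged into one kernel-verified Lean document; each statement's English description precedes it below -/
import Mathlib

section
/- The image subcomplex I_* = Im(Φ_*) ⊆ Hom_k(k[G]^⊗(*+1), k) is closed under the simplicial cup product: if α ∈ I_p and β ∈ I_q, then α ∪ β ∈ I_{p+q}. -/
/-! Common definitions: cochain complexes computing Hochschild cohomology of a
group ring `k[G]`, the inner product, the map `Φ`, and the various products. -/

noncomputable section Defs

variable (k G : Type) [CommRing k] [Group G]

/-- The bilinear inner product on `k[G]`, extending `⟨g, h⟩ = 1` if `h = g⁻¹`
and `0` otherwise: `⟨a, b⟩ = Σ_g a_g · b_{g⁻¹}`. -/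
def ip (a b : MonoidAlgebra k G) : k :=
  Finsupp.sum a.coeff fun g c => c * b.coeff g⁻¹

/-- Hochschild cochains `Hom_k(k[G]^{⊗n}, k[G])`, identified with functions on
the `k`-basis `G^n` of `k[G]^{⊗n}`. -/
abbrev Cochain (n : ℕ) := (Fin n → G) → MonoidAlgebra k G

/-- The `i`-th face of the (cyclic) bar construction for `0 ≤ i ≤ n-1`:
merge entries `i` and `i+1`. -/
def contract {n : ℕ} (g : Fin (n + 1) → G) (i : Fin n) : Fin n → G :=
  fun j => if j = i then g j.castSucc * g j.succ
    else if (j : ℕ) < (i : ℕ) then g j.castSucc else g j.succ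

/-- The Hochschild coboundary `δ` on `Hom_k(k[G]^{⊗n}, k[G])`. -/
def hdelta {n : ℕ} (f : Cochain k G n) : Cochain k G (n + 1) :=
  fun a => MonoidAlgebra.of k G (a 0) * f (Fin.tail a)
    + ∑ i : Fin n, ((-1 : ℤ) ^ ((i : ℕ) + 1)) • f (contract G a i)
    + ((-1 : ℤ) ^ (n + 1)) • (f (Fin.init a) * MonoidAlgebra.of k G (a (Fin.last n)))

/-- The coboundary `b^*` on `Hom_k(k[G]^{⊗(n+1)}, k)`, dual to the cyclic
Hochschild boundary `b`. -/
def bstar {n : ℕ} (φ : (Fin (n + 1) → G) → k) : (Fin (n + 2) → G) → k :=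
  (∑ i : Fin (n + 1), ((-1 : ℤ) ^ (i : ℕ)) • fun g => φ (contract G g i))
    + ((-1 : ℤ) ^ (n + 1)) •
      fun g => φ (fun j => if j = 0 then g (Fin.last (n + 1)) * g 0 else g j.castSucc)

/-- The cochain map `Φ_n(f)(g₀,…,g_n) = ⟨g₀, f(g₁,…,g_n)⟩`. -/
def Phi {n : ℕ} (f : Cochain k G n) : (Fin (n + 1) → G) → k :=
  fun g => ip k G (MonoidAlgebra.of k G (g 0)) (f (Fin.tail g))

/-- The basis cochain `(g₀, g₁, …, g_n)^# : k[G]^{⊗n} → k[G]`. -/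
def sharp {n : ℕ} [DecidableEq G] (g₀ : G) (gs : Fin n → G) : Cochain k G n :=
  fun h => if h = gs then MonoidAlgebra.of k G g₀ else 0

/-- The dual basis cochain `(t₀, …, t_{m-1})^* : k[G]^{⊗m} → k`. -/
def dstar {m : ℕ} [DecidableEq G] (t : Fin m → G) : (Fin m → G) → k :=
  fun h => if h = t then (1 : k) else 0

/-- The map `Ψ`, recorded by its matrix of coefficients:
`Ψ(α)(g₁,…,g_n)` is the element of `k[G]` whose coefficient at `x` is
`α(x⁻¹, g₁, …, g_n)`; on basis elements `Ψ((g₀,…,g_n)^*) = (g₀⁻¹,g₁,…,g_n)^#`. -/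
def Psi {n : ℕ} (α : (Fin (n + 1) → G) → k) : (Fin n → G) → G → k :=
  fun gs x => α (Fin.cons x⁻¹ gs)

/-- The simplicial cup product on `Hom_k(k[G]^{⊗(•+1)}, k)`:
`(α ∪ β)(g₀,…,g_{p+q}) = α(g_{p+1}⋯g_{p+q}g₀, g₁,…,g_p) · β(g₀⋯g_p, g_{p+1},…,g_{p+q})`. -/
def cup {p q : ℕ} (α : (Fin (p + 1) → G) → k) (β : (Fin (q + 1) → G) → k) :
    (Fin (p + q + 1) → G) → k :=
  fun g =>
    α (Fin.cons
        (((List.ofFn fun t : Fin q => g ⟨p + 1 + (t : ℕ), by have := t.isLt; omega⟩).prod) * g 0)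
        (fun i : Fin p => g ⟨(i : ℕ) + 1, by have := i.isLt; omega⟩))
    * β (Fin.cons
        ((List.ofFn fun t : Fin (p + 1) => g ⟨(t : ℕ), by have := t.isLt; omega⟩).prod)
        (fun i : Fin q => g ⟨p + 1 + (i : ℕ), by have := i.isLt; omega⟩))

/-- The Gerstenhaber (cup) product on Hochschild cochains:
`(f ∪_G g)(a₁,…,a_{p+q}) = f(a₁,…,a_p) · g(a_{p+1},…,a_{p+q})`. -/
def cupG {p q : ℕ} (f : Cochain k G p) (g : Cochain k G q) : Cochain k G (p + q) :=
  fun a => f (a ∘ Fin.castAdd q) * g (a ∘ Fin.natAdd p)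

/-- The `j`-th term of Steenrod's cup-one product, for `α` of degree `p+1` and
`β` of degree `q` (so `0 ≤ j ≤ (p+1)-1`):
`(α ∪₁ β)_j(σ) = α(σ₀,…,σ_j, σ_{j+1}⋯σ_{j+q}, σ_{j+q+1},…) · β(σ_{j+q+1}⋯σ_{p+q}σ₀⋯σ_j, σ_{j+1},…,σ_{j+q})`. -/
def cupOneTerm {p q : ℕ} (α : (Fin (p + 2) → G) → k) (β : (Fin (q + 1) → G) → k)
    (j : Fin (p + 1)) : (Fin (p + q + 1) → G) → k :=
  fun σ =>
    α (fun i : Fin (p + 2) =>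
        if h1 : (i : ℕ) ≤ (j : ℕ) then σ ⟨(i : ℕ), by have := j.isLt; omega⟩
        else if h2 : (i : ℕ) = (j : ℕ) + 1 then
          (List.ofFn fun t : Fin q =>
            σ ⟨(j : ℕ) + 1 + (t : ℕ), by have := t.isLt; have := j.isLt; omega⟩).prod
        else σ ⟨(i : ℕ) + q - 1, by have := i.isLt; omega⟩)
    * β (Fin.cons
        (((List.ofFn fun t : Fin (p - (j : ℕ)) =>
            σ ⟨(j : ℕ) + q + 1 + (t : ℕ), by have := t.isLt; have := j.isLt; omega⟩).prod)
          * ((List.ofFn fun t : Fin ((j : ℕ) + 1) =>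
            σ ⟨(t : ℕ), by have := t.isLt; have := j.isLt; omega⟩).prod))
        (fun t : Fin q =>
          σ ⟨(j : ℕ) + 1 + (t : ℕ), by have := t.isLt; have := j.isLt; omega⟩))

/-- Steenrod's cup-one product (for `α` of degree `p+1`, `β` of degree `q`):
`α ∪₁ β = Σ_j (-1)^{((p+1)-1-j)(q-1)} (α ∪₁ β)_j`.  (The exponent is written as
`(p-j)*(q+1)`, which has the same parity as `((p+1)-1-j)*(q-1)` for every `q ≥ 0`.) -/
def cupOne {p q : ℕ} (α : (Fin (p + 2) → G) → k) (β : (Fin (q + 1) → G) → k) :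
    (Fin (p + q + 1) → G) → k :=
  fun σ => ∑ j : Fin (p + 1),
    ((-1 : ℤ) ^ ((p - (j : ℕ)) * (q + 1))) • cupOneTerm k G α β j σ

/-- Gerstenhaber's `j`-th composition `f ∘_{(j)} g` (for `f` of degree `p+1`,
`g` of degree `q`): substitute `g` into the `j`-th slot of (the multilinear
extension of) `f`. -/
def compAt {p q : ℕ} (f : Cochain k G (p + 1)) (g : Cochain k G q) (j : Fin (p + 1)) :
    Cochain k G (p + q) :=
  fun a => Finsupp.sum
    (g fun t : Fin q => a ⟨(j : ℕ) + (t : ℕ), by have := t.isLt; have := j.isLt; omega⟩).coeff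
    (fun x c => c • f (fun i : Fin (p + 1) =>
      if h1 : (i : ℕ) < (j : ℕ) then a ⟨(i : ℕ), by have := j.isLt; omega⟩
      else if h2 : (i : ℕ) = (j : ℕ) then x
      else a ⟨(i : ℕ) + q - 1, by have := i.isLt; omega⟩))

/-- Gerstenhaber's pre-Lie product `f ∘ g = Σ_j (-1)^{(p-1-j)(q-1)} f ∘_{(j)} g`
(`f` of degree `p+1`, `g` of degree `q`; the exponent `(p-j)*(q+1)` has the same
parity as `((p+1)-1-j)*(q-1)`). -/
def preLie {p q : ℕ} (f : Cochain k G (p + 1)) (g : Cochain k G q) : Cochain k G (p + q) :=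
  fun a => ∑ j : Fin (p + 1),
    ((-1 : ℤ) ^ ((p - (j : ℕ)) * (q + 1))) • compAt k G f g j a

/-- The face maps of the cyclic bar construction `N^cy_*(G)`, from
`N^cy_{n+1}(G) = G^{n+2}` to `N^cy_n(G) = G^{n+1}`. -/
def cycFace {n : ℕ} (i : Fin (n + 2)) (g : Fin (n + 2) → G) : Fin (n + 1) → G :=
  if h : (i : ℕ) = n + 1 then
    fun j => if j = 0 then g (Fin.last (n + 1)) * g 0 else g j.castSucc
  else contract G g ⟨(i : ℕ), by have := i.isLt; omega⟩

/-- The degeneracy maps of the cyclic bar construction: insert the identity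
after position `i`. -/
def cycDegen {n : ℕ} (i : Fin (n + 1)) (g : Fin (n + 1) → G) : Fin (n + 2) → G :=
  fun j => if h1 : (j : ℕ) ≤ (i : ℕ) then g ⟨(j : ℕ), by have := i.isLt; omega⟩
    else if h2 : (j : ℕ) = (i : ℕ) + 1 then 1
    else g ⟨(j : ℕ) - 1, by have := j.isLt; omega⟩

/-- The simplicial map `ι : B_*(G) → N^cy_*(G)`,
`ι(g₁,…,g_n) = ((g₁g₂⋯g_n)⁻¹, g₁, …, g_n)`. -/
def iotaMap {n : ℕ} (g : Fin n → G) : Fin (n + 1) → G :=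
  Fin.cons ((List.ofFn g).prod)⁻¹ g

end Defs


/-! `Φ_n(f)(g₀, g₁, …, g_n)` is the coefficient of `f(g₁, …, g_n) ∈ k[G]` at `g₀⁻¹`, so the image
`I_n` of `Φ_n` consists exactly of the functions that are finitely supported in `g₀` for each
fixed `(g₁, …, g_n)`. In `(α ∪ β)(g₀, …)` the first argument of `α` is `g_{p+1}⋯g_{p+q} · g₀`,
a left translate of `g₀` by an element not depending on `g₀`; hence `α ∪ β` inherits finite
support in `g₀` from `α` alone. -/

variable {k G : Type} [CommRing k] [Group G]

theorem Fin.cons_mk_add_one {n : ℕ} {β : Type*} (x : β) (xs : Fin n → β) (m : ℕ)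
    (h : m + 1 < n + 1) : (Fin.cons x xs : Fin (n + 1) → β) ⟨m + 1, h⟩ = xs ⟨m, by omega⟩ :=
  rfl

theorem ip_of_left (g : G) (b : MonoidAlgebra k G) :
    ip k G (MonoidAlgebra.of k G g) b = b.coeff g⁻¹ := by
  simp [ip, MonoidAlgebra.of_apply]

theorem Phi_cons {n : ℕ} (f : Cochain k G n) (x : G) (gs : Fin n → G) :
    Phi k G f (Fin.cons x gs) = (f gs).coeff x⁻¹ := by
  rw [Phi, ip_of_left, Fin.cons_zero, Fin.tail_cons]

theorem mem_range_Phi_iff {n : ℕ} (α : (Fin (n + 1) → G) → k) :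
    α ∈ Set.range (Phi k G (n := n)) ↔
      ∀ gs : Fin n → G, (Function.support fun x => α (Fin.cons x gs)).Finite := by
  constructor
  · rintro ⟨f, rfl⟩ gs
    simp only [Phi_cons]
    exact (f gs).coeff.hasFiniteSupport.preimage inv_injective.injOn
  · intro h
    refine ⟨fun gs => MonoidAlgebra.ofCoeff (Finsupp.ofSupportFinite (fun x => α (Fin.cons x⁻¹ gs))
      ((h gs).preimage inv_injective.injOn |>.subset fun _ hx => hx)), ?_⟩
    funext g
    induction g using Fin.consCases with
    | cons x gs => rw [Phi_cons, MonoidAlgebra.coeff_ofCoeff, Finsupp.ofSupportFinite_coe, inv_inv]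

theorem support_cup_cons_finite {p q : ℕ} {α : (Fin (p + 1) → G) → k}
    (hα : ∀ gs : Fin p → G, (Function.support fun x => α (Fin.cons x gs)).Finite)
    (β : (Fin (q + 1) → G) → k) (gs : Fin (p + q) → G) :
    (Function.support fun x => cup k G α β (Fin.cons x gs)).Finite := by
  set P := (List.ofFn fun t : Fin q => gs ⟨p + t, by omega⟩).prod
  refine ((hα fun i => gs ⟨i, by omega⟩).preimage (mul_right_injective P).injOn).subset
    fun x hx => ?_
  simp only [Set.mem_preimage, Function.mem_support] at hx ⊢
  convert left_ne_zero_of_mul hx using 3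
  · simp only [Nat.add_right_comm p 1, Fin.cons_mk_add_one, Fin.cons_zero, P]
  · rfl

theorem cup_mem_image_general (k G : Type) [CommRing k] [Group G] (p q : ℕ)
    (α : (Fin (p + 1) → G) → k) (β : (Fin (q + 1) → G) → k)
    (hα : α ∈ Set.range (fun f : Cochain k G p => Phi k G f)) :
    cup k G α β ∈ Set.range (fun f : Cochain k G (p + q) => Phi k G f) :=
  (mem_range_Phi_iff _).2 (support_cup_cons_finite ((mem_range_Phi_iff α).1 hα) β)

/-- the image subcomplex `I_* = Im Φ_*` is closed under the
simplicial cup product: `α ∈ I_p`, `β ∈ I_q` imply `α ∪ β ∈ I_{p+q}`. -/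
theorem cup_mem_image (k G : Type) [CommRing k] [Group G] (p q : ℕ)
    (α : (Fin (p + 1) → G) → k) (β : (Fin (q + 1) → G) → k)
    (hα : α ∈ Set.range (fun f : Cochain k G p => Phi k G f))
    (hβ : β ∈ Set.range (fun f : Cochain k G q => Phi k G f)) :
    cup k G α β ∈ Set.range (fun f : Cochain k G (p + q) => Phi k G f) :=
  cup_mem_image_general k G p q α β hα
end

section
/- For α = (α₀, α₁, …, α_p)* and β = (β₀, β₁, …, β_q)*, the simplicial cup product α ∪ β is nonzero only if α₀α₁⋯α_p = β₁β₂⋯β_qβ₀ in G, in which case α ∪ β = (β₀(α₁⋯α_p)⁻¹, α₁, …, α_p, β₁, …, β_q)*. -/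
/-! Split a point of `G^{p+q+1}` as `(g₀, x, y)` with `x ∈ G^p`, `y ∈ G^q`, and write `∏x`, `∏y`
for the ordered products. Then `α ∪ β` evaluates `α` at `(∏y · g₀, x)` and `β` at `(g₀ · ∏x, y)`.
For dual basis functionals it is the indicator of these tuples being `(α₀,…,α_p)` and
`(β₀,…,β_q)`, which forces `x = (α₁,…,α_p)`, `y = (β₁,…,β_q)` and `g₀ = β₀ (α₁⋯α_p)⁻¹`;
the remaining equation `α₀ = β₁⋯β_q · g₀` then holds exactly when `α₀α₁⋯α_p = β₁⋯β_qβ₀`. -/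

theorem Fin.append_inj_iff {α : Type*} {m n : ℕ} {xs xs' : Fin m → α} {ys ys' : Fin n → α} :
    Fin.append xs ys = Fin.append xs' ys' ↔ xs = xs' ∧ ys = ys' := by
  refine ⟨fun h => ⟨funext fun i => ?_, funext fun i => ?_⟩, fun ⟨hx, hy⟩ => hx ▸ hy ▸ rfl⟩
  · simpa using congrFun h (Fin.castAdd n i)
  · simpa using congrFun h (Fin.natAdd m i)

theorem List.prod_ofFn_succ {M : Type*} [Monoid M] {n : ℕ} (f : Fin (n + 1) → M) :
    (List.ofFn f).prod = f 0 * (List.ofFn (Fin.tail f)).prod := by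
  rw [List.ofFn_succ, List.prod_cons]
  rfl

section

variable {k G : Type} [CommRing k] [Group G]

theorem cup_cons_append {p q : ℕ} (α : (Fin (p + 1) → G) → k) (β : (Fin (q + 1) → G) → k)
    (g₀ : G) (x : Fin p → G) (y : Fin q → G) :
    cup k G α β (Fin.cons g₀ (Fin.append x y)) =
      α (Fin.cons ((List.ofFn y).prod * g₀) x) * β (Fin.cons (g₀ * (List.ofFn x).prod) y) := by
  set c : Fin (p + q + 1) → G := Fin.cons g₀ (Fin.append x y)
  have hx (i : Fin p) : c ⟨i + 1, by omega⟩ = x i := by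
    simp [c, show (⟨i + 1, _⟩ : Fin (p + q + 1)) = (Fin.castAdd q i).succ from rfl]
  have hy (i : Fin q) : c ⟨p + 1 + i, by omega⟩ = y i := by
    simp [c, show (⟨p + 1 + i, _⟩ : Fin (p + q + 1)) = (Fin.natAdd p i).succ from
      Fin.ext (by simp; omega)]
  have hfront : (fun t : Fin (p + 1) => c ⟨t, by omega⟩) = Fin.cons g₀ x :=
    funext fun t => Fin.cases rfl (fun i => hx i) t
  simp only [cup, hx, hy, hfront, List.prod_ofFn_succ, Fin.cons_zero, Fin.tail_cons]
  rfl

theorem cons_prod_mul_eq_and_cons_mul_prod_eq_iff {n m : ℕ} (a : Fin (n + 1) → G)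
    (b : Fin (m + 1) → G) (g₀ : G) (x : Fin n → G) (y : Fin m → G) :
    Fin.cons ((List.ofFn y).prod * g₀) x = a ∧ Fin.cons (g₀ * (List.ofFn x).prod) y = b ↔
      (List.ofFn a).prod = (List.ofFn (Fin.tail b)).prod * b 0 ∧
        g₀ = b 0 * (List.ofFn (Fin.tail a)).prod⁻¹ ∧ x = Fin.tail a ∧ y = Fin.tail b := by
  rw [← Fin.cons_self_tail a, ← Fin.cons_self_tail b]
  generalize a 0 = a₀, Fin.tail a = a', b 0 = b₀, Fin.tail b = b'
  simp only [Fin.cons_inj, Fin.cons_zero, Fin.tail_cons, List.prod_ofFn_succ]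
  constructor
  · rintro ⟨⟨rfl, rfl⟩, rfl, rfl⟩
    exact ⟨by group, by group, rfl, rfl⟩
  · rintro ⟨h, rfl, rfl, rfl⟩
    refine ⟨⟨?_, rfl⟩, by group, rfl⟩
    rw [← mul_assoc, ← h]
    group

theorem cup_dstar_dstar [DecidableEq G] {p q : ℕ} (a : Fin (p + 1) → G) (b : Fin (q + 1) → G) :
    cup k G (dstar k G a) (dstar k G b) =
      if (List.ofFn a).prod = (List.ofFn (Fin.tail b)).prod * b 0 then
        dstar k G (Fin.cons (b 0 * ((List.ofFn (Fin.tail a)).prod)⁻¹)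
          (Fin.append (Fin.tail a) (Fin.tail b)))
      else 0 := by
  funext g
  obtain ⟨g₀, x, y, rfl⟩ : ∃ g₀ x y, g = Fin.cons g₀ (Fin.append x y) :=
    ⟨g 0, _, _, by rw [Fin.append_castAdd_natAdd, Fin.cons_self_tail]⟩
  simp only [cup_cons_append, dstar, ite_zero_mul_ite_zero, mul_one,
    cons_prod_mul_eq_and_cons_mul_prod_eq_iff, Fin.cons_inj, Fin.append_inj_iff, ite_and,
    ite_apply, Pi.zero_apply]

end

/-- for basis cochains `α = (α₀,…,α_p)^*`, `β = (β₀,…,β_q)^*`,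
the cup product `α ∪ β` is nonzero only if `α₀α₁⋯α_p = β₁β₂⋯β_qβ₀`, in which
case `α ∪ β = (β₀(α₁⋯α_p)⁻¹, α₁, …, α_p, β₁, …, β_q)^*`. -/
theorem cup_dstar (k G : Type) [CommRing k] [Group G] [DecidableEq G] (p q : ℕ)
    (a : Fin (p + 1) → G) (b : Fin (q + 1) → G) :
    (cup k G (dstar k G a) (dstar k G b) ≠ 0 →
      (List.ofFn a).prod = (List.ofFn (Fin.tail b)).prod * b 0)
    ∧ ((List.ofFn a).prod = (List.ofFn (Fin.tail b)).prod * b 0 →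
      cup k G (dstar k G a) (dstar k G b) =
        dstar k G (Fin.cons (b 0 * ((List.ofFn (Fin.tail a)).prod)⁻¹)
          (Fin.append (Fin.tail a) (Fin.tail b)))) := by
  rw [cup_dstar_dstar]
  exact ⟨fun h => by_contra fun hc => h (if_neg hc), fun h => if_pos h⟩
end

section
/- If α = (α₀, …, α_p)* and β = (β₀, …, β_q)* are basis cochains such that the products α₀α₁⋯α_p and β₀β₁⋯β_q lie in different conjugacy classes of G, then the simplicial cup product α ∪ β = 0. -/
/-! If `(α ∪ β)(g) ≠ 0` then the arguments fed to `α` and `β` are `a` and `b`. Writing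
`X = g_{p+1}⋯g_{p+q}` and `Y = g₀⋯g_p`, the argument of `α` has product `X · Y` and that of `β`
has product `Y · X`, and these are conjugate by `Y`. -/

theorem isConj_mul_comm {M : Type*} [Group M] (x y : M) : IsConj (x * y) (y * x) :=
  isConj_iff.2 ⟨y, by group⟩

theorem List.prod_ofFn_cons {M : Type*} [Monoid M] {n : ℕ} (x : M) (f : Fin n → M) :
    (List.ofFn (Fin.cons x f : Fin (n + 1) → M)).prod = x * (List.ofFn f).prod := by
  simp only [List.ofFn_succ, List.prod_cons, Fin.cons_zero, Fin.cons_succ]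

section CupArguments

variable {G : Type} [Group G] {p q : ℕ}

def cupLeftArg (g : Fin (p + q + 1) → G) : Fin (p + 1) → G :=
  Fin.cons
    (((List.ofFn fun t : Fin q => g ⟨p + 1 + (t : ℕ), by omega⟩).prod) * g 0)
    (fun i : Fin p => g ⟨(i : ℕ) + 1, by omega⟩)

def cupRightArg (g : Fin (p + q + 1) → G) : Fin (q + 1) → G :=
  Fin.cons
    ((List.ofFn fun t : Fin (p + 1) => g ⟨(t : ℕ), by omega⟩).prod)
    (fun i : Fin q => g ⟨p + 1 + (i : ℕ), by omega⟩)

theorem cup_apply (k : Type) [CommRing k] (α : (Fin (p + 1) → G) → k)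
    (β : (Fin (q + 1) → G) → k) (g : Fin (p + q + 1) → G) :
    cup k G α β g = α (cupLeftArg g) * β (cupRightArg g) :=
  rfl

theorem isConj_prod_cupLeftArg_cupRightArg (g : Fin (p + q + 1) → G) :
    IsConj (List.ofFn (cupLeftArg g)).prod (List.ofFn (cupRightArg g)).prod := by
  set X := (List.ofFn fun t : Fin q => g ⟨p + 1 + (t : ℕ), by omega⟩).prod
  set Y := (List.ofFn fun t : Fin (p + 1) => g ⟨(t : ℕ), by omega⟩).prod with hY
  have hleft : (List.ofFn (cupLeftArg g)).prod = X * Y := by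
    rw [cupLeftArg, List.prod_ofFn_cons, hY, List.ofFn_succ, List.prod_cons, mul_assoc]
    rfl
  have hright : (List.ofFn (cupRightArg g)).prod = Y * X := List.prod_ofFn_cons _ _
  rw [hleft, hright]
  exact isConj_mul_comm X Y

end CupArguments

theorem dstar_mul_dstar_eq_zero (k G : Type) [CommRing k] [DecidableEq G] {m n : ℕ}
    {a x : Fin m → G} {b y : Fin n → G} (h : ¬(x = a ∧ y = b)) :
    dstar k G a x * dstar k G b y = 0 := by
  unfold dstar
  split_ifs <;> simp_all

/-- if the products `α₀α₁⋯α_p` and `β₀β₁⋯β_q` lie in different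
conjugacy classes of `G`, then the simplicial cup product `α ∪ β = 0`. -/
theorem cup_dstar_eq_zero_of_not_isConj (k G : Type) [CommRing k] [Group G] [DecidableEq G]
    (p q : ℕ) (a : Fin (p + 1) → G) (b : Fin (q + 1) → G)
    (h : ¬ IsConj ((List.ofFn a).prod) ((List.ofFn b).prod)) :
    cup k G (dstar k G a) (dstar k G b) = 0 := by
  funext g
  rw [cup_apply, Pi.zero_apply]
  refine dstar_mul_dstar_eq_zero k G fun ⟨ha, hb⟩ => h ?_
  rw [← ha, ← hb]
  exact isConj_prod_cupLeftArg_cupRightArg g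
end
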